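/- Fix n ≥ 1. Let Q⁺₀,…,Q⁺_{n+1}, Q₀,…,Qₙ, and Q⁻₀,…,Q⁻_{n−1} be families of polynomials in ℝ[x,y], each of which is a reflexive polynomial vector (σ(Q⁺ₖ) = Q⁺_{n+1−k}, σ(Qₖ) = Q_{n−k}, σ(Q⁻ₖ) = Q⁻_{n−1−k}). Suppose the combined family {Q₀,…,Qₙ, Q⁻₀,…,Q⁻_{n−1}} is linearly independent over ℝ. Suppose there are real matrices C₁, C₂ of size (n+1)×(n+1) and D₁, D₂ of size (n+1)×n such that for every k = 0,…,n: x·Qₖ = Q⁺ₖ + Σ_{j=0}^{n} (C₁)_{kj} Qⱼ + Σ_{j=0}^{n−1} (D₁)_{kj} Q⁻ⱼ and y·Qₖ = Q⁺_{k+1} + Σ_{j=0}^{n} (C₂)_{kj} Qⱼ + Σ_{j=0}^{n−1} (D₂)_{kj} Q⁻ⱼ. Then C₁ ⇌ C₂ and D₁ ⇌ D₂. -/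

import Mathlib

/-! Applying `σ` to the `x`-relation for `Q_{n-k}` and using reflexivity of all three vectors
yields a `y`-relation for `Qₖ` whose coefficients are the reversed entries of `C₁` and `D₁`.
Since `{Q, Q⁻}` is linearly independent, these coefficients are unique, so they coincide with
the entries of `C₂` and `D₂`. -/

open MvPolynomial

/-- The ℝ-algebra automorphism of `ℝ[x,y]` interchanging the two variables. -/
noncomputable def swapVars : MvPolynomial (Fin 2) ℝ →ₐ[ℝ] MvPolynomial (Fin 2) ℝ :=
  MvPolynomial.rename ⇑(Equiv.swap (0 : Fin 2) 1)

/-- `X ⇌ Y`: each of `X`, `Y` is the reverse of the other, i.e.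
`xᵢⱼ = y_{m-i, n-j}` for all `i`, `j` (indices starting at `0`). -/
def ReverseRel {m n : ℕ} (X Y : Matrix (Fin m) (Fin n) ℝ) : Prop :=
  ∀ i j, X i j = Y i.rev j.rev

theorem LinearIndependent.coeffs_eq_of_sum_elim {R M ι κ : Type*} [Semiring R]
    [AddCommMonoid M] [Module R M] [Fintype ι] [Fintype κ] {v : ι → M} {w : κ → M}
    (hvw : LinearIndependent R (Sum.elim v w)) {a a' : ι → R} {b b' : κ → R}
    (h : ∑ i, a i • v i + ∑ j, b j • w j = ∑ i, a' i • v i + ∑ j, b' j • w j) :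
    a = a' ∧ b = b' := by
  have hcoeff := Fintype.linearIndependent_iffₛ.mp hvw (Sum.elim a b) (Sum.elim a' b')
    (by simpa only [Fintype.sum_sum_type, Sum.elim_inl, Sum.elim_inr] using h)
  exact ⟨funext fun i => hcoeff (.inl i), funext fun j => hcoeff (.inr j)⟩

theorem map_sum_smul_of_map_eq_rev {R M F : Type*} [Semiring R] [AddCommMonoid M] [Module R M]
    [FunLike F M M] [LinearMapClass F R M M] (f : F) {n : ℕ} {v : Fin n → M}
    (hv : ∀ k, f (v k) = v k.rev) (c : Fin n → R) :
    f (∑ j, c j • v j) = ∑ j, c j.rev • v j := by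
  simp only [map_sum, map_smul, hv]
  exact Fintype.sum_equiv Fin.revPerm _ _ fun j => by simp

theorem swapVars_X_zero : swapVars (X 0 : MvPolynomial (Fin 2) ℝ) = X 1 := by
  simp [swapVars, rename_X]

theorem reverseRel_iff_rev {m n : ℕ} {X Y : Matrix (Fin m) (Fin n) ℝ} :
    ReverseRel X Y ↔ ∀ i j, X i.rev j.rev = Y i j :=
  ⟨fun h i j => by simpa using h i.rev j.rev, fun h i j => by simpa using h i.rev j.rev⟩

/-- Three-term relations for `n = m + 1 ≥ 1`: if `Q⁺` (degree `n+1`), `Q` (degree `n`)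
and `Q⁻` (degree `n-1`) are reflexive polynomial vectors, the combined family
`{Q, Q⁻}` is linearly independent, and
`x Qₖ = Q⁺ₖ + Σⱼ (C₁)ₖⱼ Qⱼ + Σⱼ (D₁)ₖⱼ Q⁻ⱼ`,
`y Qₖ = Q⁺ₖ₊₁ + Σⱼ (C₂)ₖⱼ Qⱼ + Σⱼ (D₂)ₖⱼ Q⁻ⱼ`,
then `C₁ ⇌ C₂` and `D₁ ⇌ D₂`. -/
theorem three_term_coefficients_reverseRel (m : ℕ)
    (Qp : Fin (m + 3) → MvPolynomial (Fin 2) ℝ)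
    (Q : Fin (m + 2) → MvPolynomial (Fin 2) ℝ)
    (Qm : Fin (m + 1) → MvPolynomial (Fin 2) ℝ)
    (hQp : ∀ k, swapVars (Qp k) = Qp k.rev)
    (hQ : ∀ k, swapVars (Q k) = Q k.rev)
    (hQm : ∀ k, swapVars (Qm k) = Qm k.rev)
    (hli : LinearIndependent ℝ (Sum.elim Q Qm))
    (C₁ C₂ : Matrix (Fin (m + 2)) (Fin (m + 2)) ℝ)
    (D₁ D₂ : Matrix (Fin (m + 2)) (Fin (m + 1)) ℝ)
    (hx : ∀ k : Fin (m + 2),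
      X 0 * Q k = Qp k.castSucc + ∑ j, C₁ k j • Q j + ∑ j, D₁ k j • Qm j)
    (hy : ∀ k : Fin (m + 2),
      X 1 * Q k = Qp k.succ + ∑ j, C₂ k j • Q j + ∑ j, D₂ k j • Qm j) :
    ReverseRel C₁ C₂ ∧ ReverseRel D₁ D₂ := by
  have hcoeffs (k : Fin (m + 2)) :
      (fun j => C₁ k.rev j.rev) = C₂ k ∧ (fun j => D₁ k.rev j.rev) = D₂ k := by
    have hσ : X 1 * Q k =
        Qp k.succ + ∑ j, C₁ k.rev j.rev • Q j + ∑ j, D₁ k.rev j.rev • Qm j := by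
      have := congrArg swapVars (hx k.rev)
      rwa [map_mul, swapVars_X_zero, hQ, Fin.rev_rev, map_add, map_add, hQp, Fin.rev_castSucc,
        Fin.rev_rev, map_sum_smul_of_map_eq_rev swapVars hQ,
        map_sum_smul_of_map_eq_rev swapVars hQm] at this
    have hyk := hy k
    rw [hσ, add_assoc, add_assoc, add_right_inj] at hyk
    exact hli.coeffs_eq_of_sum_elim hyk
  exact ⟨reverseRel_iff_rev.mpr fun i j => congrFun (hcoeffs i).1 j,
    reverseRel_iff_rev.mpr fun i j => congrFun (hcoeffs i).2 j⟩
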